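/- arXiv:2504.19495 — 2 statements merged into one kernel-verified Lean document; each statement's English description precedes it below -/
import Mathlib

section
/- Let B be a finite multiset of operations, s a state, and c ∈ B an operation. If c labels every edge of a spanning connected subgraph of the indistinguishability graph G(B,s) (i.e., c is 'labeling': the graph is connected under edges that are c-indistinguishable), then for every permutation x of B, the response of c in x from s equals τ(s,c).val, the response that c would obtain when applied first from s. -/
universe u v w

variable {Q : Type u} {C : Type v} {V : Type w}

/-- The state reached after applying a sequence of operations via transition `τ`. -/
def runState (τ : Q → C → Q × V) : Q → List C → Q
  | s, [] => s
  | s, c :: t => runState τ (τ s c).1 t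

/-- The prefix of `x` strictly before the first occurrence of `c`. -/
def prefixTo [DecidableEq C] (c : C) (x : List C) : List C :=
  x.takeWhile (fun a => decide (a ≠ c))

/-- The response of (the first occurrence of) `c` in the permutation `x` applied from `s`. -/
def respOf (τ : Q → C → Q × V) [DecidableEq C] (s : Q) (c : C) (x : List C) : V :=
  (τ (runState τ s (prefixTo c x)) c).2

/-- The state reached immediately after (the first occurrence of) `c` in `x` from `s`. -/
def stateAfter (τ : Q → C → Q × V) [DecidableEq C] (s : Q) (c : C) (x : List C) : Q :=
  (τ (runState τ s (prefixTo c x)) c).1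

/-- Permutations `x` and `y` are indistinguishable from `s` for operation `c`. -/
def Indist (τ : Q → C → Q × V) [DecidableEq C] (s : Q) (c : C) (x y : List C) : Prop :=
  respOf τ s c x = respOf τ s c y ∧ stateAfter τ s c x = stateAfter τ s c y


section

variable [DecidableEq C]

theorem respOf_cons_self (τ : Q → C → Q × V) (s : Q) (c : C) (t : List C) :
    respOf τ s c (c :: t) = (τ s c).2 := by
  simp [respOf, prefixTo, runState]

theorem respOf_eq_of_reflTransGen (τ : Q → C → Q × V) (s : Q) (c : C)
    {r : List C → List C → Prop} (hr : ∀ a b, r a b → Indist τ s c a b) {x y : List C}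
    (h : Relation.ReflTransGen r x y) : respOf τ s c x = respOf τ s c y := by
  induction h with
  | refl => rfl
  | tail _ hab ih => exact ih.trans (hr _ _ hab).1

end

theorem labeling_resp_eq [DecidableEq C] (τ : Q → C → Q × V) (s : Q)
    (l : List C) (c : C) (hc : c ∈ l)
    (hlab : ∀ x y : List C, x.Perm l → y.Perm l →
      Relation.ReflTransGen (fun a b => a.Perm l ∧ b.Perm l ∧ Indist τ s c a b) x y) :
    ∀ x : List C, x.Perm l → respOf τ s c x = (τ s c).2 := by
  intro x hx
  have hc_first : (c :: l.erase c).Perm l := (List.perm_cons_erase hc).symm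
  calc respOf τ s c x
      = respOf τ s c (c :: l.erase c) :=
        respOf_eq_of_reflTransGen τ s c (fun _ _ h => h.2.2) (hlab x _ hx hc_first)
    _ = (τ s c).2 := respOf_cons_self τ s c _
end

section
/- If every pair of distinct operations in a finite multiset B strongly commutes from every reachable state (meaning: for all reachable states t and all c ≠ d in B, t.c.d = t.d.c, the response of c from t equals the response of c from t.d, and the response of d from t equals the response of d from t.c), then for every operation c ∈ B and every permutation x of B, the response of c in x from s equals τ(s, c).val, and all permutations of B yield the same final state from s. -/
universe u v w

variable {Q : Type u} {C : Type v} {V : Type w}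

/-!
Strong commutation at reachable states lets an operation `c` trade places with any other
operation: its response is unchanged when a distinct `d` is applied first, so peeling off the
operations run before `c` one at a time shows that `c` answers as it would from `s`. For the
final state, a permutation is a chain of adjacent transpositions, and each transposition is
performed at a reachable state, where the two swapped operations commute.
-/

section Semantics

variable (τ : Q → C → Q × V) (s : Q)

theorem runState_append (x y : List C) :
    runState τ s (x ++ y) = runState τ (runState τ s x) y := by
  induction x generalizing s with
  | nil => rfl
  | cons a t ih => exact ih _

theorem runState_append_singleton (σ : List C) (c : C) :
    runState τ s (σ ++ [c]) = (τ (runState τ s σ) c).1 :=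
  runState_append τ s σ [c]

theorem snd_runState_eq_of_not_mem {l : List C}
    (hresp : ∀ σ : List C, σ.Subperm l → ∀ c ∈ l, ∀ d ∈ l, c ≠ d →
      (τ (runState τ s σ) c).2 = (τ (τ (runState τ s σ) d).1 c).2)
    {σ : List C} (hσ : σ.Subperm l) {c : C} (hc : c ∈ l) (hcσ : c ∉ σ) :
    (τ (runState τ s σ) c).2 = (τ s c).2 := by
  induction σ using List.reverseRecOn with
  | nil => rfl
  | append_singleton σ d ih =>
    have hσ' : σ.Subperm l := (List.sublist_append_left σ [d]).subperm.trans hσ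
    have hd : d ∈ l := hσ.subset (by simp)
    have hcd : c ≠ d := by rintro rfl; simp at hcσ
    rw [runState_append_singleton, ← hresp σ hσ' c hc d hd hcd]
    exact ih hσ' (fun h => hcσ (List.mem_append_left _ h))

theorem runState_eq_of_perm {l : List C}
    (hswap : ∀ σ : List C, σ.Subperm l → ∀ c ∈ l, ∀ d ∈ l, c ≠ d →
      runState τ (runState τ s σ) [c, d] = runState τ (runState τ s σ) [d, c])
    {x y : List C} (hxy : x.Perm y) {σ : List C} (hσ : (σ ++ x).Subperm l) :
    runState τ (runState τ s σ) x = runState τ (runState τ s σ) y := by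
  induction hxy generalizing σ with
  | nil => rfl
  | cons a _ ih =>
    change runState τ (τ (runState τ s σ) a).1 _ = runState τ (τ (runState τ s σ) a).1 _
    rw [← runState_append_singleton]
    exact ih (by simpa using hσ)
  | swap a b x =>
    rcases eq_or_ne a b with rfl | hab
    · rfl
    have hσ' : σ.Subperm l := (List.sublist_append_left σ _).subperm.trans hσ
    have ha : a ∈ l := hσ.subset (by simp)
    have hb : b ∈ l := hσ.subset (by simp)
    change runState τ (runState τ (runState τ s σ) [b, a]) x =
      runState τ (runState τ (runState τ s σ) [a, b]) x
    rw [hswap σ hσ' a ha b hb hab]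
  | trans hxy _ ih₁ ih₂ =>
    exact (ih₁ hσ).trans (ih₂ ((hxy.symm.append_left σ).subperm.trans hσ))

end Semantics

theorem prefixTo_sublist [DecidableEq C] (c : C) (x : List C) : (prefixTo c x).Sublist x :=
  List.takeWhile_sublist _

theorem not_mem_prefixTo [DecidableEq C] (c : C) (x : List C) : c ∉ prefixTo c x := fun h => by
  simpa using List.mem_takeWhile_imp h

theorem strongly_commuting_conflict_free [DecidableEq C]
    (τ : Q → C → Q × V) (s : Q) (l : List C)
    (h : ∀ σ : List C, σ.Subperm l → ∀ c ∈ l, ∀ d ∈ l, c ≠ d →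
      runState τ (runState τ s σ) [c, d] = runState τ (runState τ s σ) [d, c] ∧
      (τ (runState τ s σ) c).2 = (τ (τ (runState τ s σ) d).1 c).2 ∧
      (τ (runState τ s σ) d).2 = (τ (τ (runState τ s σ) c).1 d).2) :
    (∀ c ∈ l, ∀ x : List C, x.Perm l → respOf τ s c x = (τ s c).2) ∧
    (∀ x x' : List C, x.Perm l → x'.Perm l → runState τ s x = runState τ s x') := by
  refine ⟨fun c hc x hx => ?_, fun x x' hx hx' => ?_⟩
  · exact snd_runState_eq_of_not_mem τ s (fun σ hσ c hc d hd hcd => (h σ hσ c hc d hd hcd).2.1)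
      ((prefixTo_sublist c x).subperm.trans hx.subperm) hc (not_mem_prefixTo c x)
  · exact runState_eq_of_perm τ s (fun σ hσ c hc d hd hcd => (h σ hσ c hc d hd hcd).1)
      (hx.trans hx'.symm) (σ := []) hx.subperm
end
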